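/- Let δ ∈ (0,1) and let L, L_cri be positive reals with 0 < L ≤ L_cri. Define for y ≥ 1 and real index a > 0 the extended Chebyshev function T_a(y) = cosh(a·arcosh(y)). Then cosh(L · arcosh(T_{1/L}(1/δ)/T_{1/L_cri}(1/δ))) ≤ T_{√(1 − L²/L_cri²)}(1/δ). -/

import Mathlib

/-!
Put `u = arcosh (1 / δ)`, `s = √(1 - L² / L_cri²)` and `t = L / L_cri`, so that `s² + t² = 1`.
The inequality `cosh x ≤ cosh (s x) cosh (t x)` at `x = u / L` bounds the ratio
`cosh (u / L) / cosh (u / L_cri)` by `cosh (s u / L)`, and monotonicity of `arcosh` turns this into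
`L · arcosh (ratio) ≤ s u`. The product inequality is midpoint convexity of `v ↦ cosh √v` at
`(a + b)²` and `(a - b)²`; that function is convex because its derivative `sinh √v / (2 √v)`
increases, `sinh` being convex on `[0, ∞)` with `sinh 0 = 0`.
-/

open Real hiding arcosh
open Set

/-- Inverse hyperbolic cosine on `[1, ∞)`. -/
noncomputable def arcosh (x : ℝ) : ℝ := Real.log (x + Real.sqrt (x ^ 2 - 1))

theorem arcosh_eq_real_arcosh : arcosh = Real.arcosh := rfl

theorem convexOn_sinh_Ici : ConvexOn ℝ (Ici 0) sinh := by
  refine convexOn_of_deriv2_nonneg' (convex_Ici 0) differentiable_sinh.differentiableOn ?_ ?_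
  · simpa only [Real.deriv_sinh] using differentiable_cosh.differentiableOn
  · intro x hx
    simp only [Function.iterate_succ, Function.iterate_zero,
      Function.comp_apply, Real.deriv_sinh, Real.deriv_cosh, id]
    exact sinh_nonneg_iff.2 hx

theorem monotoneOn_sinh_div_self : MonotoneOn (fun y => sinh y / y) (Ioi 0) := by
  intro x hx y hy hxy
  simpa using convexOn_sinh_Ici.secant_mono self_mem_Ici (mem_Ici_of_Ioi hx) (mem_Ici_of_Ioi hy)
    (ne_of_gt hx) (ne_of_gt hy) hxy

theorem hasDerivAt_cosh_sqrt {u : ℝ} (hu : 0 < u) :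
    HasDerivAt (fun u => cosh √u) (sinh √u / √u / 2) u := by
  convert (hasDerivAt_sqrt hu.ne').cosh using 1
  ring

theorem convexOn_cosh_sqrt : ConvexOn ℝ (Ici 0) (fun u => cosh √u) := by
  refine MonotoneOn.convexOn_of_deriv (convex_Ici 0)
    (continuous_cosh.comp continuous_sqrt).continuousOn ?_ ?_ <;> rw [interior_Ici]
  · exact fun u hu => (hasDerivAt_cosh_sqrt hu).differentiableAt.differentiableWithinAt
  · intro u hu v hv huv
    simp only [(hasDerivAt_cosh_sqrt hu).deriv, (hasDerivAt_cosh_sqrt hv).deriv]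
    gcongr ?_ / 2
    exact monotoneOn_sinh_div_self (sqrt_pos.2 hu) (sqrt_pos.2 hv) (sqrt_le_sqrt huv)

theorem cosh_sqrt_sq_add_sq_le (a b : ℝ) : cosh √(a ^ 2 + b ^ 2) ≤ cosh a * cosh b := by
  have hmid := convexOn_cosh_sqrt.2 (mem_Ici.2 (sq_nonneg (a + b))) (mem_Ici.2 (sq_nonneg (a - b)))
    (by norm_num : (0:ℝ) ≤ 1 / 2) (by norm_num : (0:ℝ) ≤ 1 / 2) (by norm_num)
  have hsum : 1 / 2 * (a + b) ^ 2 + 1 / 2 * (a - b) ^ 2 = a ^ 2 + b ^ 2 := by ring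
  simp only [smul_eq_mul, hsum, sqrt_sq_eq_abs, cosh_abs, cosh_add, cosh_sub] at hmid
  linarith

theorem cosh_le_cosh_mul_cosh {s t : ℝ} (hst : s ^ 2 + t ^ 2 = 1) (x : ℝ) :
    cosh x ≤ cosh (s * x) * cosh (t * x) := by
  have h := cosh_sqrt_sq_add_sq_le (s * x) (t * x)
  rwa [show (s * x) ^ 2 + (t * x) ^ 2 = x ^ 2 by linear_combination x ^ 2 * hst,
    sqrt_sq_eq_abs, cosh_abs] at h

theorem cosh_mul_arcosh_le {L X c : ℝ} (hX : 1 ≤ X) (h : X ≤ cosh c) :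
    cosh (L * Real.arcosh X) ≤ cosh (L * c) := by
  have harc : Real.arcosh X ≤ |c| := by
    rw [← cosh_abs] at h
    simpa only [Real.arcosh_cosh (abs_nonneg c)] using
      (Real.arcosh_le_arcosh (by linarith) (cosh_pos _)).2 h
  rw [cosh_le_cosh, abs_mul, abs_mul, abs_of_nonneg (Real.arcosh_nonneg hX)]
  gcongr

theorem key_chebyshev_inequality_general (δ L Lcri : ℝ) (hL : 0 < L) (hle : L ≤ Lcri) :
    Real.cosh (L * arcosh (Real.cosh ((1 / L) * arcosh (1 / δ)) /
        Real.cosh ((1 / Lcri) * arcosh (1 / δ)))) ≤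
      Real.cosh (Real.sqrt (1 - L ^ 2 / Lcri ^ 2) * arcosh (1 / δ)) := by
  simp only [arcosh_eq_real_arcosh]
  set u := Real.arcosh (1 / δ)
  set s := √(1 - L ^ 2 / Lcri ^ 2)
  have hLcri : 0 < Lcri := hL.trans_le hle
  have hs : s ^ 2 + (L / Lcri) ^ 2 = 1 := by
    rw [sq_sqrt (by rw [sub_nonneg, div_le_one (by positivity)]; gcongr), div_pow]
    ring
  have one_le_ratio : 1 ≤ cosh (1 / L * u) / cosh (1 / Lcri * u) := by
    rw [one_le_div (cosh_pos _), cosh_le_cosh, abs_mul, abs_mul]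
    gcongr
  have ratio_le : cosh (1 / L * u) / cosh (1 / Lcri * u) ≤ cosh (s * (1 / L * u)) := by
    have hu : L / Lcri * (1 / L * u) = 1 / Lcri * u := by field_simp
    rw [div_le_iff₀ (cosh_pos _), ← hu]
    exact cosh_le_cosh_mul_cosh hs (1 / L * u)
  calc cosh (L * Real.arcosh (cosh (1 / L * u) / cosh (1 / Lcri * u)))
      ≤ cosh (L * (s * (1 / L * u))) := cosh_mul_arcosh_le one_le_ratio ratio_le
    _ = cosh (s * u) := by field_simp

theorem key_chebyshev_inequality (δ L Lcri : ℝ) (hδ : δ ∈ Set.Ioo (0:ℝ) 1)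
    (hL : 0 < L) (hle : L ≤ Lcri) :
    Real.cosh (L * arcosh (Real.cosh ((1 / L) * arcosh (1 / δ)) /
        Real.cosh ((1 / Lcri) * arcosh (1 / δ)))) ≤
      Real.cosh (Real.sqrt (1 - L ^ 2 / Lcri ^ 2) * arcosh (1 / δ)) :=
  key_chebyshev_inequality_general δ L Lcri hL hle
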